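/- Let m ≥ 2 be a deficient natural number with largest prime factor P, and suppose there exists a prime p > P such that m·p is abundant. Then for every s ≥ 1 there exist primes p₁ < p₂ < ⋯ < p_s with p₁ > P such that m·p₁⋯p_s is abundant and m·p₁⋯p_i is deficient for every i < s. Moreover, if m is squarefree, then m·p₁⋯p_s is primitive abundant. -/

import Mathlib

/-!
Work with the abundancy index `I(n) = σ(n)/n`, which is multiplicative with `I(q) = 1 + 1/q` for a
prime `q`. If `n` is deficient, put `x = I(n)/(2 - I(n))`, so that `I(n)(1 + 1/x) = 2`. For new
primes `q < q'`, the number `n q` is deficient as soon as `q > x`, and `n q q'` is abundant as soon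
as `(1 + 1/q)(1 + 1/q') > 1 + 1/x`. Such a pair exists for every `x ≥ 2`: for `x ≥ 512` because
`(n, 2n]` contains two primes (Erdős' argument for Bertrand's postulate, where counting only the
primes up to `√(2n)` leaves room for the factor contributed by a single prime in `(n, 2n]`), and
below that from an explicit list of pairs. Starting from `m p`, replacing the last prime by such a
pair `s - 1` times produces the chain.

For squarefree `m`, every `N/r` with `r ∣ N` prime is deficient: for the largest prime `r` this is
the last partial product, and any other `r` may be exchanged for the largest prime, which only
lowers the abundancy index. Every proper divisor of `N` divides some `N/r`, and deficiency passes
to divisors.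
-/

/-- The sum of all divisors of `n`. -/
def sigma1 (n : ℕ) : ℕ := ∑ d ∈ n.divisors, d

/-- `n` is abundant if `σ(n) > 2n`. -/
def Abundant (n : ℕ) : Prop := 2 * n < sigma1 n

/-- `n` is deficient if `σ(n) < 2n`. -/
def Deficient (n : ℕ) : Prop := sigma1 n < 2 * n

/-- A primitive abundant number: abundant and all proper divisors deficient. -/
def PrimitiveAbundant (n : ℕ) : Prop :=
  Abundant n ∧ ∀ d ∈ n.properDivisors, Deficient d

open Finset

lemma abundant_iff_two_lt_abundancyIndex {n : ℕ} : Abundant n ↔ 2 < n.abundancyIndex := by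
  rw [← Nat.abundant_iff_two_lt_abundancyIndex, Nat.abundant_iff_sum_divisors]
  rfl

lemma deficient_iff_abundancyIndex_lt_two {n : ℕ} :
    Deficient n ↔ n ≠ 0 ∧ n.abundancyIndex < 2 := by
  rcases eq_or_ne n 0 with rfl | hn
  · simp [Deficient]
  · rw [Deficient, sigma1, Nat.abundancyIndex, div_lt_iff₀ (by positivity)]
    exact_mod_cast (and_iff_right hn).symm

lemma abundancyIndex_mul_prime {n q : ℕ} (hq : q.Prime) (hqn : ¬ q ∣ n) :
    (n * q).abundancyIndex = n.abundancyIndex * (1 + (q : ℚ)⁻¹) := by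
  have hcop : n.Coprime q := Nat.coprime_comm.1 (hq.coprime_iff_not_dvd.2 hqn)
  have hq0 : (q : ℚ) ≠ 0 := by exact_mod_cast hq.ne_zero
  rw [Nat.abundancyIndex, Nat.abundancyIndex, hcop.sum_divisors_mul, hq.sum_divisors]
  push_cast
  field_simp

lemma Deficient.of_dvd {d e : ℕ} (he : Deficient e) (hde : d ∣ e) : Deficient d := by
  obtain ⟨he0, hlt⟩ := deficient_iff_abundancyIndex_lt_two.1 he
  exact deficient_iff_abundancyIndex_lt_two.2
    ⟨ne_zero_of_dvd_ne_zero he0 hde, (Nat.abundancyIndex_le_of_dvd he0 hde).trans_lt hlt⟩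

lemma Deficient.mul_prime_of_le {n r t : ℕ} (h : Deficient (n * r)) (hr : r.Prime)
    (ht : t.Prime) (hrt : r ≤ t) (hrn : ¬ r ∣ n) (htn : ¬ t ∣ n) : Deficient (n * t) := by
  obtain ⟨h0, hlt⟩ := deficient_iff_abundancyIndex_lt_two.1 h
  refine deficient_iff_abundancyIndex_lt_two.2
    ⟨mul_ne_zero (left_ne_zero_of_mul h0) ht.ne_zero, lt_of_le_of_lt ?_ hlt⟩
  have hI : 0 ≤ n.abundancyIndex := by unfold Nat.abundancyIndex; positivity
  have hr0 : (0 : ℚ) < r := by exact_mod_cast hr.pos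
  rw [abundancyIndex_mul_prime hr hrn, abundancyIndex_mul_prime ht htn]
  gcongr

lemma forall_mem_properDivisors_deficient {N : ℕ}
    (h : ∀ r, r.Prime → r ∣ N → Deficient (N / r)) : ∀ d ∈ N.properDivisors, Deficient d := by
  intro d hd
  obtain ⟨⟨k, rfl⟩, hlt⟩ := Nat.mem_properDivisors.1 hd
  have hk : k ≠ 1 := by rintro rfl; simp at hlt
  obtain ⟨r, hr, l, rfl⟩ := Nat.exists_prime_and_dvd hk
  have hdiv : d * (r * l) / r = d * l := by
    rw [mul_left_comm, Nat.mul_div_cancel_left _ hr.pos]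
  exact (h r hr (dvd_mul_of_dvd_right (dvd_mul_right r l) d)).of_dvd
    (hdiv ▸ dvd_mul_right d l)

lemma primitiveAbundant_mul_prime {n t : ℕ} (hn : Deficient n) (hab : Abundant (n * t))
    (ht : t.Prime) (hsq : Squarefree n) (hlt : ∀ r, r.Prime → r ∣ n → r < t) :
    PrimitiveAbundant (n * t) := by
  have htn : ¬ t ∣ n := fun h => (hlt t ht h).false
  refine ⟨hab, forall_mem_properDivisors_deficient fun r hr hrN => ?_⟩
  rcases (Nat.Prime.dvd_mul hr).1 hrN with ⟨b, rfl⟩ | hrt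
  · have hrb : ¬ r ∣ b := fun h =>
      hr.one_lt.ne' (Nat.isUnit_iff.1 (hsq r (mul_dvd_mul_left r h)))
    rw [mul_assoc, Nat.mul_div_cancel_left _ hr.pos]
    rw [mul_comm] at hn
    exact hn.mul_prime_of_le hr ht (hlt r hr (dvd_mul_right r b)).le hrb
      (fun h => htn (dvd_mul_of_dvd_right h r))
  · rw [(Nat.prime_dvd_prime_iff_eq hr ht).1 hrt, Nat.mul_div_cancel _ ht.pos]
    exact hn

open Nat in
theorem centralBinom_le_pow_card_primes_mul_four_pow (n : ℕ) (hn : 2 < n) :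
    centralBinom n ≤ (2 * n) ^ (#{p ∈ range (sqrt (2 * n) + 1) | p.Prime} +
      #{p ∈ Ioc n (2 * n) | p.Prime}) * 4 ^ (2 * n / 3) := by
  set f : ℕ → ℕ := fun p => p ^ (centralBinom n).factorization p
  set T := {p ∈ range (2 * n + 1) | p.Prime}
  set Q : ℕ → Prop := fun p => p ≤ sqrt (2 * n) ∨ n < p
  have hT : centralBinom n = ∏ p ∈ T, f p := by
    rw [prod_filter_of_ne fun p _ h => ?_, prod_pow_factorization_centralBinom]
    contrapose! h
    simp [f, factorization_eq_zero_of_not_prime _ h]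
  have hQ : ∏ p ∈ T with Q p, f p ≤ (2 * n) ^ (#{p ∈ range (sqrt (2 * n) + 1) | p.Prime} +
      #{p ∈ Ioc n (2 * n) | p.Prime}) := by
    refine (prod_le_pow_card _ _ _ fun p _ => pow_factorization_choose_le (by omega)).trans ?_
    refine pow_le_pow_right₀ (by omega) ((card_le_card fun p hp => ?_).trans (card_union_le _ _))
    simp only [T, Q, mem_filter, mem_range, mem_Ioc, mem_union] at hp ⊢
    obtain ⟨⟨hp2n, hp⟩, hsmall | hlarge⟩ := hp
    · exact Or.inl ⟨by omega, hp⟩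
    · exact Or.inr ⟨⟨hlarge, by omega⟩, hp⟩
  have hnotQ : ∏ p ∈ T with ¬ Q p, f p ≤ 4 ^ (2 * n / 3) := by
    have hmid : ∀ p ∈ {p ∈ T | ¬ Q p}, p.Prime ∧ sqrt (2 * n) < p ∧ p ≤ n := by
      intro p hp
      simp only [T, Q, mem_filter, mem_range, not_or, not_lt, not_le] at hp
      exact ⟨hp.1.2, hp.2⟩
    calc ∏ p ∈ T with ¬ Q p, f p = ∏ p ∈ {p ∈ T | ¬ Q p} with p ≤ 2 * n / 3, f p := by
          refine (prod_filter_of_ne fun p hp h => ?_).symm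
          contrapose! h
          obtain ⟨-, -, hpn⟩ := hmid p hp
          simp [f, factorization_centralBinom_of_two_mul_self_lt_three_mul hn hpn (by omega)]
      _ ≤ ∏ p ∈ {p ∈ T | ¬ Q p} with p ≤ 2 * n / 3, p := by
          refine prod_le_prod' fun p hp => ?_
          obtain ⟨hp, hsqrt, -⟩ := hmid p (mem_filter.1 hp).1
          exact (pow_le_pow_right₀ hp.one_lt.le
            (factorization_choose_le_one (sqrt_lt'.1 hsqrt))).trans (pow_one p).le
      _ ≤ primorial (2 * n / 3) := by
          refine prod_le_prod_of_subset_of_one_le' (fun p hp => ?_) fun p hp _ => ?_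
          · obtain ⟨hp, hp3⟩ := mem_filter.1 hp
            exact mem_filter.2 ⟨mem_range.2 (by omega), (hmid p hp).1⟩
          · exact (mem_filter.1 hp).2.one_lt.le
      _ ≤ 4 ^ (2 * n / 3) := primorial_le_four_pow _
  rw [hT, ← prod_filter_mul_prod_filter_not T Q]
  exact Nat.mul_le_mul hQ hnotQ

open Nat in
theorem exists_two_primes_lt_and_le_two_mul {n : ℕ} (hn : 512 ≤ n) :
    ∃ p q, p.Prime ∧ q.Prime ∧ n < p ∧ p < q ∧ q ≤ 2 * n := by
  by_contra! h
  have hlarge : #{p ∈ Ioc n (2 * n) | p.Prime} ≤ 1 := by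
    refine card_le_one.2 fun p hp q hq => ?_
    simp only [mem_filter, mem_Ioc] at hp hq
    by_contra hpq
    rcases lt_or_gt_of_ne hpq with hpq | hpq
    · exact (h p q hp.2 hq.2 hp.1.1 hpq).not_ge hq.1.2
    · exact (h q p hq.2 hp.2 hq.1.1 hpq).not_ge hp.1.2
  have hsmall : #{p ∈ range (sqrt (2 * n) + 1) | p.Prime} ≤ sqrt (2 * n) - 1 := by
    refine (card_le_card fun p hp => ?_).trans (card_Icc 2 (sqrt (2 * n))).le
    simp only [mem_filter, mem_range] at hp
    exact mem_Icc.2 ⟨hp.2.two_le, by omega⟩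
  have hsqrt : 1 ≤ sqrt (2 * n) := le_sqrt.2 (by omega)
  have := (four_pow_lt_mul_centralBinom n (by omega)).trans_le <|
    Nat.mul_le_mul_left n <| centralBinom_le_pow_card_primes_mul_four_pow n (by omega)
  have hexp : (2 * n) ^ (#{p ∈ range (sqrt (2 * n) + 1) | p.Prime} +
      #{p ∈ Ioc n (2 * n) | p.Prime}) ≤ (2 * n) ^ sqrt (2 * n) :=
    pow_le_pow_right₀ (by omega) (by omega)
  grw [hexp, ← mul_assoc, bertrand_main_inequality hn] at this
  exact this.false

/-- Two new primes `q < q'` multiply the abundancy index by `(1 + 1/q)(1 + 1/q')`. -/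
def HasPrimePairAbove (x : ℚ) : Prop :=
  ∃ q q' : ℕ, q.Prime ∧ q'.Prime ∧ x < q ∧ q < q' ∧
    1 + x⁻¹ < (1 + (q : ℚ)⁻¹) * (1 + (q' : ℚ)⁻¹)

lemma hasPrimePairAbove_of_512_le {x : ℚ} (hx : 512 ≤ x) : HasPrimePairAbove x := by
  have hn : 512 ≤ ⌊x⌋₊ := Nat.le_floor (by exact_mod_cast hx)
  obtain ⟨q, q', hq, hq', hnq, hqq', hq'n⟩ := exists_two_primes_lt_and_le_two_mul hn
  have hxq : x < q := (Nat.lt_floor_add_one x).trans_le (by exact_mod_cast hnq)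
  have hx0 : 0 < x := by linarith
  have hn2x : ((2 * ⌊x⌋₊ : ℕ) : ℚ) ≤ 2 * x := by push_cast; linarith [Nat.floor_le hx0.le]
  have hq2x : (q : ℚ) ≤ 2 * x := le_trans (by exact_mod_cast (hqq'.trans_le hq'n).le) hn2x
  have hq'2x : (q' : ℚ) ≤ 2 * x := le_trans (by exact_mod_cast hq'n) hn2x
  refine ⟨q, q', hq, hq', hxq, hqq', ?_⟩
  calc 1 + x⁻¹ < (1 + (2 * x)⁻¹) * (1 + (2 * x)⁻¹) := by
        -- the right side is `1 + 1/x + 1/(4x²)`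
        field_simp
        nlinarith
    _ ≤ (1 + (q : ℚ)⁻¹) * (1 + (q' : ℚ)⁻¹) := by
        have hq0 : (0 : ℚ) < q := by exact_mod_cast hq.pos
        have hq'0 : (0 : ℚ) < q' := by exact_mod_cast hq'.pos
        gcongr

lemma hasPrimePairAbove_of_pair {L M : ℚ} (q q' : ℕ) (hq : q.Prime := by norm_num)
    (hq' : q'.Prime := by norm_num) (hqq' : q < q' := by norm_num) (hL : 0 < L := by norm_num)
    (hpair : 1 + L⁻¹ < (1 + (q : ℚ)⁻¹) * (1 + (q' : ℚ)⁻¹) := by norm_num)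
    (hM : M ≤ q := by norm_num) (h : ∀ x, M ≤ x → HasPrimePairAbove x) :
    ∀ x, L ≤ x → HasPrimePairAbove x := by
  intro x hx
  rcases le_or_gt M x with hMx | hxM
  · exact h x hMx
  · refine ⟨q, q', hq, hq', hxM.trans_le hM, hqq', lt_of_le_of_lt ?_ hpair⟩
    gcongr

lemma hasPrimePairAbove (x : ℚ) (hx : 2 ≤ x) : HasPrimePairAbove x := by
  revert x
  refine hasPrimePairAbove_of_pair 3 5 (M := 3) (h := ?_)
  refine hasPrimePairAbove_of_pair 5 7 (M := 5) (h := ?_)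
  refine hasPrimePairAbove_of_pair 7 11 (M := 6) (h := ?_)
  refine hasPrimePairAbove_of_pair 11 13 (M := 8) (h := ?_)
  refine hasPrimePairAbove_of_pair 13 17 (M := 13) (h := ?_)
  refine hasPrimePairAbove_of_pair 23 29 (M := 20) (h := ?_)
  refine hasPrimePairAbove_of_pair 37 41 (M := 36) (h := ?_)
  refine hasPrimePairAbove_of_pair 71 73 (M := 69) (h := ?_)
  refine hasPrimePairAbove_of_pair 137 139 (M := 133) (h := ?_)
  refine hasPrimePairAbove_of_pair 263 269 (M := 261) (h := ?_)
  refine hasPrimePairAbove_of_pair 521 523 (M := 512) (h := ?_)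
  exact fun x hx => hasPrimePairAbove_of_512_le hx

lemma exists_primes_deficient_mul_abundant_mul_mul {n w : ℕ} (hn : Deficient n) (hw : w.Prime)
    (hlt : ∀ r, r.Prime → r ∣ n → r < w) (hab : Abundant (n * w)) :
    ∃ q q', q.Prime ∧ q'.Prime ∧ w < q ∧ q < q' ∧ Deficient (n * q) ∧ Abundant (n * q * q') := by
  obtain ⟨hn0, hI⟩ := deficient_iff_abundancyIndex_lt_two.1 hn
  set I := n.abundancyIndex
  have hnot_dvd : ∀ r, r.Prime → w ≤ r → ¬ r ∣ n := fun r hr hwr h => (hlt r hr h).not_ge hwr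
  have hIw := abundant_iff_two_lt_abundancyIndex.1 hab
  rw [abundancyIndex_mul_prime hw (hnot_dvd w hw le_rfl)] at hIw
  have hw0 : (0 : ℚ) < w := by exact_mod_cast hw.pos
  have hI0 : 0 < I := pos_of_mul_pos_left (by linarith) (by positivity)
  set x := I / (2 - I)
  have hx : I * (1 + x⁻¹) = 2 := by
    simp only [x]; field_simp; ring
  have hwx : (w : ℚ) < x := by
    rw [mul_add, mul_one, ← div_eq_mul_inv, ← sub_lt_iff_lt_add', lt_div_iff₀ hw0] at hIw
    rw [lt_div_iff₀ (by linarith)]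
    linarith
  obtain ⟨q, q', hq, hq', hxq, hqq', hpair⟩ :=
    hasPrimePairAbove x (le_trans (by exact_mod_cast hw.two_le) hwx.le)
  have hwq : w < q := by exact_mod_cast hwx.trans hxq
  have hqn := hnot_dvd q hq hwq.le
  have hq'nq : ¬ q' ∣ n * q := fun h => ((Nat.Prime.dvd_mul hq').1 h).elim
    (hnot_dvd q' hq' (hwq.trans hqq').le)
    (fun h => hqq'.ne' ((Nat.prime_dvd_prime_iff_eq hq' hq).1 h))
  refine ⟨q, q', hq, hq', hwq, hqq', ?_, ?_⟩
  · refine deficient_iff_abundancyIndex_lt_two.2 ⟨mul_ne_zero hn0 hq.ne_zero, ?_⟩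
    rw [abundancyIndex_mul_prime hq hqn, ← hx]
    gcongr
  · rw [abundant_iff_two_lt_abundancyIndex, abundancyIndex_mul_prime hq' hq'nq,
      abundancyIndex_mul_prime hq hqn, ← hx, mul_assoc]
    gcongr

lemma Fin.prod_filter_val_lt_succ_cons {M : Type*} [CommMonoid M] {s : ℕ} (x : M)
    (f : Fin s → M) (i : ℕ) :
    ∏ j ∈ univ.filter (fun j : Fin (s + 1) => (j : ℕ) < i + 1), (Fin.cons x f : Fin (s + 1) → M) j
      = x * ∏ j ∈ univ.filter (fun j : Fin s => (j : ℕ) < i), f j := by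
  rw [prod_filter, prod_filter, Fin.prod_univ_succ]
  simp

theorem exists_prime_chain (s : ℕ) {n w : ℕ} (hn : Deficient n) (hw : w.Prime)
    (hlt : ∀ r, r.Prime → r ∣ n → r < w) (hab : Abundant (n * w)) :
    ∃ ps : Fin (s + 1) → ℕ, (∀ i, (ps i).Prime) ∧ StrictMono ps ∧ (∀ i, w ≤ ps i) ∧
      Abundant (n * ∏ i, ps i) ∧
      (∀ i : ℕ, i < s + 1 →
        Deficient (n * ∏ j ∈ univ.filter (fun j : Fin (s + 1) => (j : ℕ) < i), ps j)) ∧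
      (Squarefree n → PrimitiveAbundant (n * ∏ i, ps i)) := by
  induction s generalizing n w with
  | zero =>
    refine ⟨fun _ => w, fun _ => hw, Subsingleton.strictMono (α := Fin 1) _, fun _ => le_rfl,
      by simpa using hab, fun i hi => ?_,
      fun hsq => by simpa using primitiveAbundant_mul_prime hn hab hw hsq hlt⟩
    obtain rfl : i = 0 := by omega
    simpa using hn
  | succ s ih =>
    obtain ⟨q, q', hq, hq', hwq, hqq', hdef, hab'⟩ :=
      exists_primes_deficient_mul_abundant_mul_mul hn hw hlt hab
    have hqn : ¬ q ∣ n := fun h => (hlt q hq h).not_gt hwq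
    have hlt' : ∀ r, r.Prime → r ∣ n * q → r < q' := fun r hr h => ((Nat.Prime.dvd_mul hr).1 h).elim
      (fun h => ((hlt r hr h).trans hwq).trans hqq')
      (fun h => (Nat.le_of_dvd hq.pos h).trans_lt hqq')
    obtain ⟨ps, hps, hmono, hq'ps, habps, hdefps, hpan⟩ := ih hdef hq' hlt' hab'
    have hqps : ∀ j, q < ps j := fun j => hqq'.trans_le (hq'ps j)
    refine ⟨Fin.cons q ps, Fin.cases hq hps, Fin.strictMono_cons.2 ⟨hqps, hmono⟩,
      Fin.cases hwq.le fun j => (hwq.trans (hqps j)).le, ?_, fun i hi => ?_, fun hsq => ?_⟩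
    · rwa [Fin.prod_cons, ← mul_assoc]
    · rcases i with _ | i
      · simpa using hn
      · rw [Fin.prod_filter_val_lt_succ_cons, ← mul_assoc]
        exact hdefps i (by omega)
    · rw [Fin.prod_cons, ← mul_assoc]
      exact hpan (Nat.squarefree_mul_iff.2
        ⟨Nat.coprime_comm.1 (hq.coprime_iff_not_dvd.2 hqn), hsq, hq.squarefree⟩)

theorem stmt15_general (m P : ℕ) (hdef : Deficient m)
    (hPmax : ∀ q : ℕ, q.Prime → q ∣ m → q ≤ P)
    (p : ℕ) (hp : p.Prime) (hpP : P < p) (hab : Abundant (m * p)) :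
    ∀ s : ℕ, 1 ≤ s → ∃ ps : Fin s → ℕ,
      (∀ i, (ps i).Prime) ∧ StrictMono ps ∧ (∀ i, P < ps i) ∧
      Abundant (m * ∏ i, ps i) ∧
      (∀ i : ℕ, i < s →
        Deficient (m * ∏ j ∈ Finset.univ.filter (fun j : Fin s => (j : ℕ) < i), ps j)) ∧
      (Squarefree m → PrimitiveAbundant (m * ∏ i, ps i)) := by
  intro s hs
  obtain ⟨s, rfl⟩ : ∃ t, s = t + 1 := ⟨s - 1, by omega⟩
  obtain ⟨ps, hps, hmono, hpps, habps, hdefps, hpan⟩ :=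
    exists_prime_chain s hdef hp (fun r hr h => (hPmax r hr h).trans_lt hpP) hab
  exact ⟨ps, hps, hmono, fun i => hpP.trans_le (hpps i), habps, hdefps, hpan⟩

/-- If `m ≥ 2` is deficient with largest prime factor `P` and there is a prime
`p > P` with `m·p` abundant, then for every `s ≥ 1` there are primes
`p₁ < ⋯ < p_s`, all larger than `P`, such that `m·p₁⋯p_s` is abundant,
every partial product `m·p₁⋯p_i` with `i < s` is deficient, and if `m` is
squarefree then `m·p₁⋯p_s` is primitive abundant. -/
theorem stmt15 (m P : ℕ) (hm : 2 ≤ m) (hdef : Deficient m)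
    (hP : P.Prime) (hPdvd : P ∣ m) (hPmax : ∀ q : ℕ, q.Prime → q ∣ m → q ≤ P)
    (p : ℕ) (hp : p.Prime) (hpP : P < p) (hab : Abundant (m * p)) :
    ∀ s : ℕ, 1 ≤ s → ∃ ps : Fin s → ℕ,
      (∀ i, (ps i).Prime) ∧ StrictMono ps ∧ (∀ i, P < ps i) ∧
      Abundant (m * ∏ i, ps i) ∧
      (∀ i : ℕ, i < s →
        Deficient (m * ∏ j ∈ Finset.univ.filter (fun j : Fin s => (j : ℕ) < i), ps j)) ∧
      (Squarefree m → PrimitiveAbundant (m * ∏ i, ps i)) :=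
  stmt15_general m P hdef hPmax p hp hpP hab
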